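/- arXiv:2109.00454 — 2 statements merged into one kernel-verified Lean document; each statement's English description precedes it below -/
import Mathlib

section
/- The expected energy gap between the archetype configuration and any example configuration η^c equals E[H(ξ)] − E[H(η^c)] = (N−1)·(1 + (M−1)·r⁴ − M·r²) with r = 2p−1; moreover, when 0 < r < 1, this gap is negative (i.e. the archetype is energetically favored over the examples) if and only if M > (1+r²)/r². -/
/-!
Since `ξ i ^ 2 = 1`, the archetype cancels from both energies, which become sums over ordered
pairs `i ≠ j` and patterns `a` of expectations of products of the independent signs `χ`, each of
mean `r`. For `i ≠ j` one has `E[χ_i^a χ_j^a] = r ^ 2`, while `E[χ_i^a χ_j^a χ_i^c χ_j^c]` is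
`r ^ 4` for `a ≠ c` and `1` for `a = c`, squares of signs being `1`. Summing over the
`N (N - 1)` pairs gives the gap, which factors as `(N - 1) (1 - r ^ 2) (1 + r ^ 2 - M r ^ 2)`.
-/

open MeasureTheory ProbabilityTheory Finset

section SignVariable

variable {Ω : Type*} [MeasurableSpace Ω] {P : Measure Ω} {X Y : Ω → ℝ} {p : ℝ}

lemma ae_abs_eq_one_of_measure_eq [IsProbabilityMeasure P] (hX : Measurable X)
    (hp0 : 0 ≤ p) (hp1 : p ≤ 1) (h1 : P {ω | X ω = 1} = ENNReal.ofReal p)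
    (hm1 : P {ω | X ω = -1} = ENNReal.ofReal (1 - p)) :
    ∀ᵐ ω ∂P, |X ω| = 1 := by
  have hset : {ω | |X ω| = 1} = {ω | X ω = 1} ∪ {ω | X ω = -1} := by
    ext ω
    simp [abs_eq zero_le_one]
  have hdisj : Disjoint {ω | X ω = 1} {ω | X ω = -1} :=
    Set.disjoint_left.2 fun ω h1 h2 => by norm_num [show X ω = 1 from h1] at h2
  have hA : MeasurableSet {ω | X ω = 1} := hX (measurableSet_singleton _)
  have hB : MeasurableSet {ω | X ω = -1} := hX (measurableSet_singleton _)
  change {ω | |X ω| = 1} ∈ ae P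
  rw [hset, mem_ae_iff, prob_compl_eq_zero_iff (hA.union hB), measure_union hdisj hB, h1, hm1,
    ← ENNReal.ofReal_add hp0 (by linarith)]
  simp

lemma ae_abs_mul_eq_one (hX : ∀ᵐ ω ∂P, |X ω| = 1) (hY : ∀ᵐ ω ∂P, |Y ω| = 1) :
    ∀ᵐ ω ∂P, |X ω * Y ω| = 1 := by
  filter_upwards [hX, hY] with ω hXω hYω
  rw [abs_mul, hXω, hYω, one_mul]

lemma integrable_of_ae_abs_eq_one [IsFiniteMeasure P] (hX : AEStronglyMeasurable X P)
    (habs : ∀ᵐ ω ∂P, |X ω| = 1) : Integrable X P :=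
  .of_bound hX 1 (habs.mono fun ω h => by rw [Real.norm_eq_abs, h])

lemma integral_eq_two_mul_sub_one [IsProbabilityMeasure P] (hX : Measurable X)
    (habs : ∀ᵐ ω ∂P, |X ω| = 1) (hp0 : 0 ≤ p) (h1 : P {ω | X ω = 1} = ENNReal.ofReal p) :
    ∫ ω, X ω ∂P = 2 * p - 1 := by
  have hA : MeasurableSet {ω | X ω = 1} := hX (measurableSet_singleton 1)
  have heq : X =ᵐ[P] fun ω => {ω | X ω = 1}.indicator (fun _ => (2 : ℝ)) ω - 1 := by
    filter_upwards [habs] with ω hω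
    rcases (abs_eq zero_le_one).1 hω with h | h <;> norm_num [Set.indicator, h]
  rw [integral_congr_ae heq, integral_sub ((integrable_const 2).indicator hA) (integrable_const 1),
    integral_indicator_const _ hA, integral_const, measureReal_def, h1, ENNReal.toReal_ofReal hp0]
  simp only [probReal_univ, smul_eq_mul]
  ring

end SignVariable

section CommonMean

variable {Ω ι : Type*} [MeasurableSpace Ω] {P : Measure Ω} {X : ι → Ω → ℝ} {m : ℝ}

lemma integral_mul_eq_sq_of_ne (hX : iIndepFun X P) (hmeas : ∀ k, Measurable (X k))
    (hmean : ∀ k, ∫ ω, X k ω ∂P = m) {k l : ι} (hkl : k ≠ l) :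
    ∫ ω, X k ω * X l ω ∂P = m ^ 2 := by
  rw [(hX.indepFun hkl).integral_fun_mul_eq_mul_integral (hmeas k).aestronglyMeasurable
    (hmeas l).aestronglyMeasurable, hmean, hmean, sq]

lemma integral_mul_mul_eq_pow_four (hX : iIndepFun X P) (hmeas : ∀ k, Measurable (X k))
    (hmean : ∀ k, ∫ ω, X k ω ∂P = m) {i j k l : ι} (hij : i ≠ j) (hkl : k ≠ l) (hik : i ≠ k)
    (hil : i ≠ l) (hjk : j ≠ k) (hjl : j ≠ l) :
    ∫ ω, X i ω * X j ω * (X k ω * X l ω) ∂P = m ^ 4 := by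
  have h := (hX.indepFun_mul_mul hmeas i j k l hik hil hjk hjl).integral_fun_mul_eq_mul_integral
    ((hmeas i).mul (hmeas j)).aestronglyMeasurable ((hmeas k).mul (hmeas l)).aestronglyMeasurable
  simp only [Pi.mul_apply] at h
  rw [h, integral_mul_eq_sq_of_ne hX hmeas hmean hij, integral_mul_eq_sq_of_ne hX hmeas hmean hkl]
  ring

end CommonMean

section ExampleHamiltonian

variable {Ω ι κ : Type*} [Fintype ι] [DecidableEq ι] [Fintype κ]

noncomputable def exampleHamiltonian (ξ : ι → ℝ) (χ : ι × κ → Ω → ℝ) (σ : ι → ℝ) (ω : Ω) : ℝ :=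
  -(1 / Fintype.card ι) * ∑ i, ∑ j ∈ univ.erase i, ∑ a,
    (ξ i * χ (i, a) ω) * (ξ j * χ (j, a) ω) * (σ i * σ j)

variable {ξ : ι → ℝ} {χ : ι × κ → Ω → ℝ}

lemma exampleHamiltonian_archetype_mul (hξ : ∀ i, ξ i = 1 ∨ ξ i = -1) (τ : ι → ℝ) (ω : Ω) :
    exampleHamiltonian ξ χ (fun i => ξ i * τ i) ω
      = -(1 / Fintype.card ι) * ∑ i, ∑ j ∈ univ.erase i, ∑ a,
          χ (i, a) ω * χ (j, a) ω * (τ i * τ j) := by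
  have hsq : ∀ i, ξ i * ξ i = 1 := fun i => by rcases hξ i with h | h <;> norm_num [h]
  unfold exampleHamiltonian
  congr 1
  refine sum_congr rfl fun i _ => sum_congr rfl fun j _ => sum_congr rfl fun a _ => ?_
  linear_combination (χ (i, a) ω * χ (j, a) ω * (τ i * τ j)) * (ξ j * ξ j * hsq i + hsq j)

variable [MeasurableSpace Ω] {P : Measure Ω} {r : ℝ}

lemma integral_sum_offDiag_sum {g : ι → ι → κ → Ω → ℝ}
    (hg : ∀ i j, i ≠ j → ∀ a, Integrable (g i j a) P) {t : κ → ℝ}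
    (ht : ∀ i j, i ≠ j → ∀ a, ∫ ω, g i j a ω ∂P = t a) :
    ∫ ω, ∑ i, ∑ j ∈ univ.erase i, ∑ a, g i j a ω ∂P
      = Fintype.card ι * (Fintype.card ι - 1) * ∑ a, t a := by
  have hg' : ∀ i, ∀ j ∈ univ.erase i, ∀ a, Integrable (g i j a) P :=
    fun i j hj => hg i j (ne_of_mem_erase hj).symm
  rw [integral_finsetSum _ fun i _ => integrable_finsetSum _ fun j hj =>
    integrable_finsetSum _ fun a _ => hg' i j hj a]
  calc ∑ i, ∫ ω, ∑ j ∈ univ.erase i, ∑ a, g i j a ω ∂P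
      = ∑ i : ι, ∑ _j ∈ univ.erase i, ∑ a, t a := by
        refine sum_congr rfl fun i _ => ?_
        rw [integral_finsetSum _ fun j hj => integrable_finsetSum _ fun a _ => hg' i j hj a]
        refine sum_congr rfl fun j hj => ?_
        rw [integral_finsetSum _ fun a _ => hg' i j hj a]
        exact sum_congr rfl fun a _ => ht i j (ne_of_mem_erase hj).symm a
    _ = _ := by
        simp only [sum_const, nsmul_eq_mul, cast_card_erase_of_mem (mem_univ _), card_univ]
        ring

lemma integral_exampleHamiltonian_archetype [Nonempty ι]
    (hξ : ∀ i, ξ i = 1 ∨ ξ i = -1) (hmeas : ∀ k, Measurable (χ k))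
    (habs : ∀ k, ∀ᵐ ω ∂P, |χ k ω| = 1) (hindep : iIndepFun χ P)
    (hmean : ∀ k, ∫ ω, χ k ω ∂P = r) :
    ∫ ω, exampleHamiltonian ξ χ ξ ω ∂P = -(Fintype.card ι - 1) * (Fintype.card κ * r ^ 2) := by
  have := hindep.isProbabilityMeasure
  have hpair : ∀ i j, i ≠ j → ∀ a, ∫ ω, χ (i, a) ω * χ (j, a) ω * (1 * 1) ∂P = r ^ 2 := by
    intro i j hij a
    simp only [mul_one]
    exact integral_mul_eq_sq_of_ne hindep hmeas hmean fun h => hij (congrArg Prod.fst h)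
  have hint : ∀ i j a, Integrable (fun ω => χ (i, a) ω * χ (j, a) ω * (1 * 1)) P := by
    intro i j a
    simp only [mul_one]
    exact integrable_of_ae_abs_eq_one ((hmeas _).mul (hmeas _)).aestronglyMeasurable
      (ae_abs_mul_eq_one (habs _) (habs _))
  have hgauge : ∀ ω, exampleHamiltonian ξ χ ξ ω = exampleHamiltonian ξ χ (fun i => ξ i * 1) ω := by
    simp
  simp_rw [hgauge, exampleHamiltonian_archetype_mul hξ]
  rw [integral_const_mul, integral_sum_offDiag_sum (fun i j _ a => hint i j a) hpair]
  simp only [sum_const, card_univ, nsmul_eq_mul]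
  field_simp

lemma integral_exampleHamiltonian_example [Nonempty ι]
    (hξ : ∀ i, ξ i = 1 ∨ ξ i = -1) (hmeas : ∀ k, Measurable (χ k))
    (habs : ∀ k, ∀ᵐ ω ∂P, |χ k ω| = 1) (hindep : iIndepFun χ P)
    (hmean : ∀ k, ∫ ω, χ k ω ∂P = r) (c : κ) :
    ∫ ω, exampleHamiltonian ξ χ (fun i => ξ i * χ (i, c) ω) ω ∂P
      = -(Fintype.card ι - 1) * (1 + (Fintype.card κ - 1) * r ^ 4) := by
  classical
  have := hindep.isProbabilityMeasure
  have hquad : ∀ i j, i ≠ j → ∀ a,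
      ∫ ω, χ (i, a) ω * χ (j, a) ω * (χ (i, c) ω * χ (j, c) ω) ∂P
        = if a = c then 1 else r ^ 4 := by
    intro i j hij a
    have hfst : ∀ b d : κ, (i, b) ≠ (j, d) := fun b d h => hij (congrArg Prod.fst h)
    split_ifs with hac
    · subst hac
      have hsq : ∀ᵐ ω ∂P, χ (i, a) ω * χ (j, a) ω * (χ (i, a) ω * χ (j, a) ω) = 1 := by
        filter_upwards [ae_abs_mul_eq_one (habs (i, a)) (habs (j, a))] with ω h
        rw [← abs_mul_abs_self, h, one_mul]
      rw [integral_congr_ae hsq, integral_const]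
      simp
    · have hsnd : ∀ k : ι, (k, a) ≠ (k, c) := fun k h => hac (congrArg Prod.snd h)
      exact integral_mul_mul_eq_pow_four hindep hmeas hmean (hfst a a) (hfst c c) (hsnd i)
        (hfst a c) (hfst c a).symm (hsnd j)
  have hint : ∀ i j a,
      Integrable (fun ω => χ (i, a) ω * χ (j, a) ω * (χ (i, c) ω * χ (j, c) ω)) P :=
    fun i j a => integrable_of_ae_abs_eq_one (by fun_prop) <|
      ae_abs_mul_eq_one (ae_abs_mul_eq_one (habs _) (habs _))
        (ae_abs_mul_eq_one (habs _) (habs _))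
  simp_rw [exampleHamiltonian_archetype_mul hξ]
  rw [integral_const_mul, integral_sum_offDiag_sum (fun i j _ a => hint i j a) hquad,
    Fintype.sum_eq_add_sum_compl c, if_pos rfl, sum_ite_of_false fun a ha => by simpa using ha,
    sum_const, card_compl, card_singleton, nsmul_eq_mul,
    Nat.cast_sub (Fintype.card_pos_iff.2 ⟨c⟩), Nat.cast_one]
  field_simp

end ExampleHamiltonian

lemma energy_gap_neg_iff {n m r : ℝ} (hn : 1 < n) (hr0 : 0 < r) (hr1 : r < 1) :
    (n - 1) * (1 + (m - 1) * r ^ 4 - m * r ^ 2) < 0 ↔ (1 + r ^ 2) / r ^ 2 < m := by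
  have hfactor : (n - 1) * (1 + (m - 1) * r ^ 4 - m * r ^ 2)
      = (n - 1) * (1 - r ^ 2) * (1 + r ^ 2 - m * r ^ 2) := by ring
  have hpos : 0 < (n - 1) * (1 - r ^ 2) := mul_pos (by linarith) (by nlinarith)
  rw [hfactor, div_lt_iff₀ (by positivity), ← sub_neg (a := 1 + r ^ 2)]
  exact ⟨fun h => neg_of_mul_neg_right h hpos.le, mul_neg_of_pos_of_neg hpos⟩

theorem energy_gap_archetype_vs_example_general
    {Ω : Type*} [MeasurableSpace Ω] (P : Measure Ω) [IsProbabilityMeasure P]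
    (N M : ℕ) (hN : 2 ≤ N)
    (p : ℝ) (hp : p ∈ Set.Ioo (1 / 2 : ℝ) 1)
    (r : ℝ) (hr : r = 2 * p - 1)
    (ξ : Fin N → ℝ) (hξ : ∀ i, ξ i = 1 ∨ ξ i = -1)
    (χ : Fin N × Fin M → Ω → ℝ)
    (hχmeas : ∀ k, Measurable (χ k))
    (hχ1 : ∀ k, P {ω | χ k ω = 1} = ENNReal.ofReal p)
    (hχm1 : ∀ k, P {ω | χ k ω = -1} = ENNReal.ofReal (1 - p))
    (hindep : iIndepFun χ P)
    (H : (Fin N → ℝ) → Ω → ℝ)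
    (hH : ∀ σ ω, H σ ω =
      -(1 / N) * ∑ i : Fin N, ∑ j ∈ Finset.univ.erase i, ∑ a : Fin M,
        (ξ i * χ (i, a) ω) * (ξ j * χ (j, a) ω) * (σ i * σ j))
    (c : Fin M) :
    ((∫ ω, H ξ ω ∂P) - ∫ ω, H (fun i => ξ i * χ (i, c) ω) ω ∂P
        = (N - 1) * (1 + (M - 1) * r ^ 4 - M * r ^ 2))
    ∧ ((∫ ω, H ξ ω ∂P) - (∫ ω, H (fun i => ξ i * χ (i, c) ω) ω ∂P) < 0
        ↔ (1 + r ^ 2) / r ^ 2 < M) := by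
  obtain ⟨hp0, hp1⟩ := hp
  have : Nonempty (Fin N) := ⟨⟨0, by omega⟩⟩
  have hHdef : H = exampleHamiltonian ξ χ := by
    ext σ ω
    simp [hH, exampleHamiltonian]
  have habs : ∀ k, ∀ᵐ ω ∂P, |χ k ω| = 1 := fun k =>
    ae_abs_eq_one_of_measure_eq (hχmeas k) (by linarith) hp1.le (hχ1 k) (hχm1 k)
  have hmean : ∀ k, ∫ ω, χ k ω ∂P = r := fun k =>
    hr ▸ integral_eq_two_mul_sub_one (hχmeas k) (habs k) (by linarith) (hχ1 k)
  have hgap : (∫ ω, H ξ ω ∂P) - ∫ ω, H (fun i => ξ i * χ (i, c) ω) ω ∂P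
      = (N - 1) * (1 + (M - 1) * r ^ 4 - M * r ^ 2) := by
    rw [hHdef, integral_exampleHamiltonian_archetype hξ hχmeas habs hindep hmean,
      integral_exampleHamiltonian_example hξ hχmeas habs hindep hmean c]
    simp only [Fintype.card_fin]
    ring
  exact ⟨hgap, hgap ▸ energy_gap_neg_iff (by exact_mod_cast hN) (by linarith) (by linarith)⟩

/-- The expected energy gap between the archetype configuration and any
example configuration `η^c` equals
`E[H(ξ)] - E[H(η^c)] = (N-1)*(1 + (M-1)*r^4 - M*r^2)` with `r = 2p - 1`; moreover, when
`0 < r < 1`, this gap is negative (the archetype is energetically favored over the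
examples) if and only if `M > (1 + r^2)/r^2`. -/
theorem energy_gap_archetype_vs_example
    {Ω : Type*} [MeasurableSpace Ω] (P : Measure Ω) [IsProbabilityMeasure P]
    (N M : ℕ) (hN : 2 ≤ N) (hM : 1 ≤ M)
    (p : ℝ) (hp : p ∈ Set.Ioo (1 / 2 : ℝ) 1)
    (r : ℝ) (hr : r = 2 * p - 1)
    (ξ : Fin N → ℝ) (hξ : ∀ i, ξ i = 1 ∨ ξ i = -1)
    (χ : Fin N × Fin M → Ω → ℝ)
    (hχmeas : ∀ k, Measurable (χ k))
    (hχ1 : ∀ k, P {ω | χ k ω = 1} = ENNReal.ofReal p)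
    (hχm1 : ∀ k, P {ω | χ k ω = -1} = ENNReal.ofReal (1 - p))
    (hindep : iIndepFun χ P)
    (H : (Fin N → ℝ) → Ω → ℝ)
    (hH : ∀ σ ω, H σ ω =
      -(1 / N) * ∑ i : Fin N, ∑ j ∈ Finset.univ.erase i, ∑ a : Fin M,
        (ξ i * χ (i, a) ω) * (ξ j * χ (j, a) ω) * (σ i * σ j))
    (c : Fin M) :
    ((∫ ω, H ξ ω ∂P) - ∫ ω, H (fun i => ξ i * χ (i, c) ω) ω ∂P
        = (N - 1) * (1 + (M - 1) * r ^ 4 - M * r ^ 2))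
    ∧ ((∫ ω, H ξ ω ∂P) - (∫ ω, H (fun i => ξ i * χ (i, c) ω) ω ∂P) < 0
        ↔ (1 + r ^ 2) / r ^ 2 < M) :=
  energy_gap_archetype_vs_example_general P N M hN p hp r hr ξ hξ χ hχmeas hχ1 hχm1 hindep H hH c
end

section
/- In the multi-archetype model, for any index i, the signal felt by the example η^{1,1}, namely h_i η_i^{1,1} = (1/N) Σ_{j≠i} Σ_{μ=1}^K Σ_{a=1}^M η_i^{μ,a} η_j^{μ,a} η_i^{1,1} η_j^{1,1}, has expectation E[h_i η_i^{1,1}] = ((N−1)/N)·(1 + (M−1)·(2p−1)⁴), independent of K, where the expectation is over both the archetypes and the noise. -/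
/-!
Expanding `J`, the field is `(1/N) Σ_{j ≠ i} Σ_{ν,a} η_i^{ν,a} η_j^{ν,a} η_i^{1,1} η_j^{1,1}`, and
for `j ≠ i` every summand is a product of independent `±1` spins. If `ν ≠ 1`, the archetype spin
`ξ_i^ν` occurs exactly once and has mean zero. If `ν = 1` but `a ≠ 1`, the archetype spins square
to one and four distinct noise spins of mean `r = 2p - 1` remain, contributing `r⁴`. The term
`(ν, a) = (1, 1)` is a square of a `±1` spin, hence equal to one. So each of the `N - 1` sites `j`
contributes `(1 + (M - 1) r⁴) / N`.
-/

open MeasureTheory ProbabilityTheory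

section

variable {Ω : Type*} [MeasurableSpace Ω] {P : Measure Ω}

section TwoPoint

variable [IsProbabilityMeasure P] {f : Ω → ℝ} {q : ℝ}

theorem ae_eq_one_or_eq_neg_one_of_measure_eq (hf : Measurable f) (hq₀ : 0 ≤ q) (hq₁ : q ≤ 1)
    (h1 : P {ω | f ω = 1} = ENNReal.ofReal q) (hm1 : P {ω | f ω = -1} = ENNReal.ofReal (1 - q)) :
    ∀ᵐ ω ∂P, f ω = 1 ∨ f ω = -1 := by
  have hdisj : Disjoint {ω | f ω = 1} {ω | f ω = -1} :=
    Set.disjoint_left.2 fun ω (h : f ω = 1) (h' : f ω = -1) => by norm_num [h] at h'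
  have hunion : P ({ω | f ω = 1} ∪ {ω | f ω = -1}) = P Set.univ := by
    rw [measure_union hdisj (hf (measurableSet_singleton _)), h1, hm1,
      ← ENNReal.ofReal_add hq₀ (by linarith), add_sub_cancel, ENNReal.ofReal_one, measure_univ]
  have hmeas : MeasurableSet ({ω | f ω = 1} ∪ {ω | f ω = -1}) :=
    (hf (measurableSet_singleton _)).union (hf (measurableSet_singleton _))
  exact (ae_iff_measure_eq hmeas.nullMeasurableSet).2 hunion

theorem integral_eq_two_mul_sub_one_of_measure_eq (hf : Measurable f) (hq₀ : 0 ≤ q)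
    (hq₁ : q ≤ 1) (h1 : P {ω | f ω = 1} = ENNReal.ofReal q)
    (hm1 : P {ω | f ω = -1} = ENNReal.ofReal (1 - q)) :
    ∫ ω, f ω ∂P = 2 * q - 1 := by
  have hA : MeasurableSet {ω | f ω = 1} := hf (measurableSet_singleton 1)
  have hf_eq : f =ᵐ[P] fun ω => 2 * {ω | f ω = 1}.indicator 1 ω - 1 := by
    filter_upwards [ae_eq_one_or_eq_neg_one_of_measure_eq hf hq₀ hq₁ h1 hm1] with ω hω
    rcases hω with hω | hω <;> norm_num [Set.indicator_apply, hω]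
  have hint : Integrable (fun ω => 2 * {ω | f ω = 1}.indicator (1 : Ω → ℝ) ω) P :=
    ((integrable_indicator_iff hA).2 (integrable_const 1).integrableOn).const_mul 2
  rw [integral_congr_ae hf_eq, integral_sub hint (integrable_const 1), integral_const_mul,
    integral_indicator_one hA, measureReal_def, h1, ENNReal.toReal_ofReal hq₀]
  simp

end TwoPoint

theorem ProbabilityTheory.iIndepFun.integral_prod_comp_of_injective {ι κ : Type*} [Fintype κ]
    {g : ι → Ω → ℝ} (hg : iIndepFun g P) (hmeas : ∀ k, Measurable (g k)) {e : κ → ι}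
    (he : e.Injective) :
    ∫ ω, ∏ t, g (e t) ω ∂P = ∏ t, ∫ ω, g (e t) ω ∂P :=
  (hg.precomp he).integral_fun_prod_eq_prod_integral fun t => (hmeas (e t)).aestronglyMeasurable

theorem injective_corners {α β : Type*} {i j : α} {b c : β} (hij : i ≠ j) (hbc : b ≠ c) :
    Function.Injective ![(i, b), (j, b), (i, c), (j, c)] := by
  intro s t
  fin_cases s <;> fin_cases t <;> simp [hij, hij.symm, hbc, hbc.symm]

variable {α β γ : Type*}

structure MultiArchetypeModel (P : Measure Ω) (ξ : α × β → Ω → ℝ) (χ : α × β × γ → Ω → ℝ)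
    (r : ℝ) : Prop where
  measurable : ∀ k, Measurable (Sum.elim ξ χ k)
  indep : iIndepFun (Sum.elim ξ χ) P
  abs_archetype : ∀ k, ∀ᵐ ω ∂P, |ξ k ω| = 1
  abs_noise : ∀ k, ∀ᵐ ω ∂P, |χ k ω| = 1
  integral_archetype : ∀ k, ∫ ω, ξ k ω ∂P = 0
  integral_noise : ∀ k, ∫ ω, χ k ω ∂P = r

def noisyExample (ξ : α × β → Ω → ℝ) (χ : α × β × γ → Ω → ℝ) (i : α) (ν : β) (a : γ)
    (ω : Ω) : ℝ :=
  ξ (i, ν) ω * χ (i, ν, a) ω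

namespace MultiArchetypeModel

variable {ξ : α × β → Ω → ℝ} {χ : α × β × γ → Ω → ℝ} {r : ℝ} {i j : α} {ν z : β} {a z' : γ}

local notation "η" => noisyExample ξ χ

theorem of_measure_eq {p : ℝ} (hp₀ : 0 ≤ p) (hp₁ : p ≤ 1)
    (hξmeas : ∀ k, Measurable (ξ k)) (hχmeas : ∀ k, Measurable (χ k))
    (hξ1 : ∀ k, P {ω | ξ k ω = 1} = ENNReal.ofReal (1 / 2))
    (hξm1 : ∀ k, P {ω | ξ k ω = -1} = ENNReal.ofReal (1 / 2))
    (hχ1 : ∀ k, P {ω | χ k ω = 1} = ENNReal.ofReal p)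
    (hχm1 : ∀ k, P {ω | χ k ω = -1} = ENNReal.ofReal (1 - p))
    (hindep : iIndepFun (Sum.elim ξ χ) P) :
    MultiArchetypeModel P ξ χ (2 * p - 1) := by
  have := hindep.isProbabilityMeasure
  have hξm1' : ∀ k, P {ω | ξ k ω = -1} = ENNReal.ofReal (1 - 1 / 2) := fun k => by
    rw [hξm1]; norm_num
  have hsign : ∀ {f : Ω → ℝ}, (∀ᵐ ω ∂P, f ω = 1 ∨ f ω = -1) → ∀ᵐ ω ∂P, |f ω| = 1 :=
    fun hf => hf.mono fun ω hω => (abs_eq zero_le_one).2 hω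
  exact
    { measurable := Sum.forall.2 ⟨hξmeas, hχmeas⟩
      indep := hindep
      abs_archetype := fun k => hsign <| ae_eq_one_or_eq_neg_one_of_measure_eq (hξmeas k)
        (by norm_num) (by norm_num) (hξ1 k) (hξm1' k)
      abs_noise := fun k => hsign <|
        ae_eq_one_or_eq_neg_one_of_measure_eq (hχmeas k) hp₀ hp₁ (hχ1 k) (hχm1 k)
      integral_archetype := fun k => by
        rw [integral_eq_two_mul_sub_one_of_measure_eq (hξmeas k) (by norm_num) (by norm_num)
          (hξ1 k) (hξm1' k)]
        norm_num
      integral_noise := fun k =>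
        integral_eq_two_mul_sub_one_of_measure_eq (hχmeas k) hp₀ hp₁ (hχ1 k) (hχm1 k) }

theorem abs_noisyExample (h : MultiArchetypeModel P ξ χ r) (i : α) (ν : β) (a : γ) :
    ∀ᵐ ω ∂P, |η i ν a ω| = 1 := by
  filter_upwards [h.abs_archetype (i, ν), h.abs_noise (i, ν, a)] with ω hξ hχ
  rw [noisyExample, abs_mul, hξ, hχ, one_mul]

theorem integrable_overlap (h : MultiArchetypeModel P ξ χ r) (i j : α) (ν z : β) (a z' : γ) :
    Integrable (fun ω => η i ν a ω * η j ν a ω * (η i z z' ω * η j z z' ω)) P := by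
  have := h.indep.isProbabilityMeasure
  have hmeas : ∀ i ν a, Measurable (η i ν a) := fun i ν a =>
    (h.measurable (.inl (i, ν))).mul (h.measurable (.inr (i, ν, a)))
  refine (integrable_const (1 : ℝ)).mono' (by fun_prop) ?_
  filter_upwards [h.abs_noisyExample i ν a, h.abs_noisyExample j ν a, h.abs_noisyExample i z z',
    h.abs_noisyExample j z z'] with ω h₁ h₂ h₃ h₄
  simp [h₁, h₂, h₃, h₄]

theorem integral_overlap_self (h : MultiArchetypeModel P ξ χ r) (i j : α) (z : β) (z' : γ) :
    ∫ ω, η i z z' ω * η j z z' ω * (η i z z' ω * η j z z' ω) ∂P = 1 := by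
  have := h.indep.isProbabilityMeasure
  have hone : ∀ᵐ ω ∂P, η i z z' ω * η j z z' ω * (η i z z' ω * η j z z' ω) = 1 := by
    filter_upwards [h.abs_noisyExample i z z', h.abs_noisyExample j z z'] with ω hi hj
    rw [← abs_mul_abs_self, abs_mul, hi, hj, one_mul, one_mul]
  simp [integral_congr_ae hone]

theorem integral_overlap_of_ne_noise (h : MultiArchetypeModel P ξ χ r) (hij : i ≠ j)
    (ha : a ≠ z') :
    ∫ ω, η i z a ω * η j z a ω * (η i z z' ω * η j z z' ω) ∂P = r ^ 4 := by
  set e := ![(i, z, a), (j, z, a), (i, z, z'), (j, z, z')]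
  have he : e.Injective := injective_corners (b := (z, a)) (c := (z, z')) hij (by simpa)
  have hprod : ∀ᵐ ω ∂P, η i z a ω * η j z a ω * (η i z z' ω * η j z z' ω) =
      ∏ t, Sum.elim ξ χ ((Sum.inr ∘ e) t) ω := by
    filter_upwards [h.abs_archetype (i, z), h.abs_archetype (j, z)] with ω hi hj
    have hi' : ξ (i, z) ω * ξ (i, z) ω = 1 := by rw [← abs_mul_abs_self, hi, one_mul]
    have hj' : ξ (j, z) ω * ξ (j, z) ω = 1 := by rw [← abs_mul_abs_self, hj, one_mul]
    set c := χ (i, z, a) ω * χ (j, z, a) ω * χ (i, z, z') ω * χ (j, z, z') ω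
    simp only [noisyExample, e, Function.comp_apply, Sum.elim_inr, Fin.prod_univ_four,
      Matrix.cons_val_zero, Matrix.cons_val_one, Matrix.cons_val]
    linear_combination (c * ξ (j, z) ω * ξ (j, z) ω) * hi' + c * hj'
  rw [integral_congr_ae hprod, h.indep.integral_prod_comp_of_injective h.measurable
    (Sum.inr_injective.comp he)]
  simp [e, h.integral_noise]

theorem integral_overlap_of_ne (h : MultiArchetypeModel P ξ χ r) (hij : i ≠ j) (hν : ν ≠ z)
    (a z' : γ) :
    ∫ ω, η i ν a ω * η j ν a ω * (η i z z' ω * η j z z' ω) ∂P = 0 := by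
  set e : Fin 4 ⊕ Fin 4 → (α × β) ⊕ (α × β × γ) :=
    Sum.map ![(i, ν), (j, ν), (i, z), (j, z)] ![(i, ν, a), (j, ν, a), (i, z, z'), (j, z, z')]
  have he : e.Injective :=
    (injective_corners hij hν).sumMap (injective_corners (b := (ν, a)) hij (by simp [hν]))
  have hprod : ∀ ω, η i ν a ω * η j ν a ω * (η i z z' ω * η j z z' ω) =
      ∏ t, Sum.elim ξ χ (e t) ω := by
    intro ω
    simp only [noisyExample, e, Fintype.prod_sum_type, Sum.map_inl, Sum.map_inr, Sum.elim_inl,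
      Sum.elim_inr, Fin.prod_univ_four, Matrix.cons_val_zero, Matrix.cons_val_one, Matrix.cons_val]
    ring
  simp_rw [hprod]
  rw [h.indep.integral_prod_comp_of_injective h.measurable he]
  exact Finset.prod_eq_zero (Finset.mem_univ (.inl 0)) (by simp [e, h.integral_archetype])

theorem integral_overlap [DecidableEq β] [DecidableEq γ] (h : MultiArchetypeModel P ξ χ r)
    (hij : i ≠ j) (ν z : β) (a z' : γ) :
    ∫ ω, η i ν a ω * η j ν a ω * (η i z z' ω * η j z z' ω) ∂P =
      if ν = z then if a = z' then 1 else r ^ 4 else 0 := by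
  split_ifs with hν ha
  · subst hν ha
    exact h.integral_overlap_self i j ν a
  · subst hν
    exact h.integral_overlap_of_ne_noise hij ha
  · exact h.integral_overlap_of_ne hij hν a z'

theorem integral_sum_overlap [Fintype β] [Fintype γ] (h : MultiArchetypeModel P ξ χ r)
    (hij : i ≠ j) (z : β) (z' : γ) :
    ∫ ω, ∑ ν, ∑ a, η i ν a ω * η j ν a ω * (η i z z' ω * η j z z' ω) ∂P =
      1 + (Fintype.card γ - 1) * r ^ 4 := by
  classical
  rw [integral_finsetSum _ fun ν _ =>
    integrable_finsetSum _ fun a _ => h.integrable_overlap i j ν z a z']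
  have hν : ∀ ν, ∫ ω, ∑ a, η i ν a ω * η j ν a ω * (η i z z' ω * η j z z' ω) ∂P =
      ∑ a, if ν = z then if a = z' then 1 else r ^ 4 else 0 := fun ν => by
    rw [integral_finsetSum _ fun a _ => h.integrable_overlap i j ν z a z']
    exact Finset.sum_congr rfl fun a _ => h.integral_overlap hij ν z a z'
  have hγ : 1 ≤ Fintype.card γ := Fintype.card_pos_iff.2 ⟨z'⟩
  simp only [hν, Finset.sum_ite_irrel, Finset.sum_const_zero, Fintype.sum_ite_eq']
  rw [Fintype.sum_eq_add_sum_compl z', if_pos rfl,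
    Finset.sum_congr rfl fun a ha => if_neg (Finset.mem_compl.1 ha ∘ Finset.mem_singleton.2)]
  simp [Finset.card_compl, Nat.cast_sub hγ]

end MultiArchetypeModel

end

theorem multi_archetype_example_field_expectation_general
    {Ω : Type*} [MeasurableSpace Ω] (P : Measure Ω)
    (N K M : ℕ) (hK : 1 ≤ K) (hM : 1 ≤ M)
    (p : ℝ) (hp : p ∈ Set.Icc (1 / 2 : ℝ) 1)
    (ξ : Fin N × Fin K → Ω → ℝ) (χ : Fin N × Fin K × Fin M → Ω → ℝ)
    (hξmeas : ∀ k, Measurable (ξ k)) (hχmeas : ∀ k, Measurable (χ k))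
    (hξ1 : ∀ k, P {ω | ξ k ω = 1} = ENNReal.ofReal (1 / 2))
    (hξm1 : ∀ k, P {ω | ξ k ω = -1} = ENNReal.ofReal (1 / 2))
    (hχ1 : ∀ k, P {ω | χ k ω = 1} = ENNReal.ofReal p)
    (hχm1 : ∀ k, P {ω | χ k ω = -1} = ENNReal.ofReal (1 - p))
    (hindep : iIndepFun (Sum.elim ξ χ) P)
    (J : Fin N → Fin N → Ω → ℝ)
    (hJ : ∀ i j ω, J i j ω =
      (1 / N) * ∑ ν : Fin K, ∑ a : Fin M,
        (ξ (i, ν) ω * χ (i, ν, a) ω) * (ξ (j, ν) ω * χ (j, ν, a) ω))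
    (i : Fin N) :
    ∫ ω, (∑ j ∈ Finset.univ.erase i,
        J i j ω *
          ((ξ (i, (⟨0, hK⟩ : Fin K)) ω * χ (i, (⟨0, hK⟩ : Fin K), (⟨0, hM⟩ : Fin M)) ω) *
           (ξ (j, (⟨0, hK⟩ : Fin K)) ω * χ (j, (⟨0, hK⟩ : Fin K), (⟨0, hM⟩ : Fin M)) ω))) ∂P
      = ((N - 1) / N) * (1 + (M - 1) * (2 * p - 1) ^ 4) := by
  have h := MultiArchetypeModel.of_measure_eq (by linarith [hp.1]) hp.2 hξmeas hχmeas hξ1 hξm1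
    hχ1 hχm1 hindep
  set η := noisyExample ξ χ
  set z : Fin K := ⟨0, hK⟩
  set z' : Fin M := ⟨0, hM⟩
  have hfield : ∀ j ω, J i j ω * (η i z z' ω * η j z z' ω) =
      1 / N * ∑ ν, ∑ a, η i ν a ω * η j ν a ω * (η i z z' ω * η j z z' ω) := fun j ω => by
    simp only [hJ, η, noisyExample, mul_assoc, Finset.sum_mul]
  change ∫ ω, ∑ j ∈ Finset.univ.erase i, J i j ω * (η i z z' ω * η j z z' ω) ∂P = _
  simp only [hfield]
  rw [integral_finsetSum _ fun j _ => (integrable_finsetSum _ fun ν _ =>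
    integrable_finsetSum _ fun a _ => h.integrable_overlap i j ν z a z').const_mul _]
  rw [Finset.sum_congr rfl fun j hj => by
    rw [integral_const_mul, h.integral_sum_overlap (Finset.ne_of_mem_erase hj).symm]]
  simp [Finset.card_erase_of_mem, Nat.cast_sub (Fin.pos i)]
  ring

/-- In the multi-archetype model, for any index `i`, the signal felt by
the example `η^{1,1}`, namely `h_i η_i^{1,1} = Σ_{j≠i} J_{ij} η_i^{1,1} η_j^{1,1}`, has
expectation `E[h_i η_i^{1,1}] = ((N-1)/N) * (1 + (M-1)*(2p-1)^4)`, independent of `K`,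
over both archetypes and noise. -/
theorem multi_archetype_example_field_expectation
    {Ω : Type*} [MeasurableSpace Ω] (P : Measure Ω) [IsProbabilityMeasure P]
    (N K M : ℕ) (hN : 2 ≤ N) (hK : 1 ≤ K) (hM : 1 ≤ M)
    (p : ℝ) (hp : p ∈ Set.Icc (1 / 2 : ℝ) 1)
    (ξ : Fin N × Fin K → Ω → ℝ) (χ : Fin N × Fin K × Fin M → Ω → ℝ)
    (hξmeas : ∀ k, Measurable (ξ k)) (hχmeas : ∀ k, Measurable (χ k))
    (hξ1 : ∀ k, P {ω | ξ k ω = 1} = ENNReal.ofReal (1 / 2))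
    (hξm1 : ∀ k, P {ω | ξ k ω = -1} = ENNReal.ofReal (1 / 2))
    (hχ1 : ∀ k, P {ω | χ k ω = 1} = ENNReal.ofReal p)
    (hχm1 : ∀ k, P {ω | χ k ω = -1} = ENNReal.ofReal (1 - p))
    (hindep : iIndepFun (Sum.elim ξ χ) P)
    (J : Fin N → Fin N → Ω → ℝ)
    (hJ : ∀ i j ω, J i j ω =
      (1 / N) * ∑ ν : Fin K, ∑ a : Fin M,
        (ξ (i, ν) ω * χ (i, ν, a) ω) * (ξ (j, ν) ω * χ (j, ν, a) ω))
    (i : Fin N) :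
    ∫ ω, (∑ j ∈ Finset.univ.erase i,
        J i j ω *
          ((ξ (i, (⟨0, hK⟩ : Fin K)) ω * χ (i, (⟨0, hK⟩ : Fin K), (⟨0, hM⟩ : Fin M)) ω) *
           (ξ (j, (⟨0, hK⟩ : Fin K)) ω * χ (j, (⟨0, hK⟩ : Fin K), (⟨0, hM⟩ : Fin M)) ω))) ∂P
      = ((N - 1) / N) * (1 + (M - 1) * (2 * p - 1) ^ 4) :=
  multi_archetype_example_field_expectation_general P N K M hK hM p hp ξ χ hξmeas hχmeas hξ1 hξm1
    hχ1 hχm1 hindep J hJ i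
end
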